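/- Let J be an adapted complex structure on a finite simple graph G. If v and w are vertices of G with w = Jv, then deg(v) and deg(w) have the same parity. -/

import Mathlib

/-!  Framework: the 2-step nilpotent Lie algebra `𝔫_G` associated to a finite simple
graph `G` (Dani–Mainkar construction), and adapted complex structures on it. -/

open scoped BigOperators

namespace GraphLie

variable {V : Type*} [Fintype V] [LinearOrder V]

/-- The underlying real vector space of the Lie algebra `𝔫_G` associated to a graph `G`:
real-valued functions on its basis `V ⊕ G.edgeSet` (vertices and edges). -/
abbrev Niln (G : SimpleGraph V) : Type _ := (V ⊕ G.edgeSet) → ℝ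

variable (G : SimpleGraph V) [DecidableRel G.Adj]

/-- The basis vector of `𝔫_G` corresponding to the vertex `v`. -/
noncomputable def vtx (v : V) : Niln G := Pi.single (Sum.inl v) 1

/-- The basis vector of `𝔫_G` corresponding to the edge `e`. -/
noncomputable def edg (e : G.edgeSet) : Niln G := Pi.single (Sum.inr e) 1

/-- The basis vector of `𝔫_G` corresponding to a vertex or an edge. -/
noncomputable def basisVec (b : V ⊕ G.edgeSet) : Niln G := Pi.single b 1

/-- The bracket of two vertex generators: for adjacent vertices `i < j` (with respect to
the chosen labeling of the vertices) `[v_i, v_j] = e_{i,j}` and `[v_j, v_i] = -e_{i,j}`;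
non-adjacent vertices commute. -/
noncomputable def bracketVtx (i j : V) : Niln G :=
  if h : G.Adj i j then
    (if i < j then edg G ⟨s(i, j), G.mem_edgeSet.mpr h⟩
     else - edg G ⟨s(i, j), G.mem_edgeSet.mpr h⟩)
  else 0

/-- The Lie bracket of `𝔫_G`, extended bilinearly from the generators; all the
edge generators are central. -/
noncomputable def bracket (x y : Niln G) : Niln G :=
  ∑ i : V, ∑ j : V, (x (Sum.inl i) * y (Sum.inl j)) • bracketVtx G i j

/-- An adapted complex structure on the graph `G`: a linear endomorphism `J` of `𝔫_G`
with `J ∘ J = -id`, whose Nijenhuis tensor vanishes, and which sends each basis vector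
(vertex or edge) to plus or minus a basis vector. -/
structure AdaptedCS : Type _ where
  J : Niln G →ₗ[ℝ] Niln G
  j_squared : ∀ x, J (J x) = -x
  integrable : ∀ x y,
    bracket G x y + J (bracket G (J x) y + bracket G x (J y)) - bracket G (J x) (J y) = 0
  adapted : ∀ b : V ⊕ G.edgeSet,
    (∃ b', J (basisVec G b) = basisVec G b') ∨ (∃ b', J (basisVec G b) = - basisVec G b')

variable {G}

/-- An edge of `G` joining vertices `v` and `w` is distinguished if `Jv = w` or `Jw = v`. -/
def AdaptedCS.Distinguished (Jc : AdaptedCS G) (e : G.edgeSet) : Prop :=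
  ∃ v w : V, (e : Sym2 V) = s(v, w) ∧
    (Jc.J (vtx G v) = vtx G w ∨ Jc.J (vtx G w) = vtx G v)

end GraphLie

namespace GraphLie

variable {V : Type*} [Fintype V] [LinearOrder V] {G : SimpleGraph V} [DecidableRel G.Adj]

set_option linter.unusedSectionVars false
set_option linter.unusedVariables false
set_option linter.unnecessarySeqFocus false

/-! ### auxiliary lemmas -/

lemma vtx_apply (a : V) (c : V ⊕ G.edgeSet) :
    vtx G a c = if c = Sum.inl a then 1 else 0 := by
  simp [vtx, Pi.single_apply]

lemma edg_apply (e : G.edgeSet) (c : V ⊕ G.edgeSet) :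
    edg G e c = if c = Sum.inr e then 1 else 0 := by
  simp [edg, Pi.single_apply]

lemma vtx_ne_zero (a : V) : vtx G a ≠ 0 := by
  intro h
  have := congrFun h (Sum.inl a)
  simp [vtx_apply] at this

lemma bracket_vtx_vtx (a b : V) :
    bracket G (vtx G a) (vtx G b) = bracketVtx G a b := by
  rw [bracket]
  rw [Finset.sum_eq_single a]
  · rw [Finset.sum_eq_single b]
    · simp [vtx_apply]
    · intro j _ hj; simp [vtx_apply, hj]
    · intro h; exact absurd (Finset.mem_univ b) h
  · intro i _ hi; simp [vtx_apply, hi]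
  · intro h; exact absurd (Finset.mem_univ a) h

lemma bracket_smul_right (x y : Niln G) (c : ℝ) :
    bracket G x (c • y) = c • bracket G x y := by
  rw [bracket, bracket, Finset.smul_sum]
  refine Finset.sum_congr rfl fun i _ => ?_
  rw [Finset.smul_sum]
  refine Finset.sum_congr rfl fun j _ => ?_
  rw [Pi.smul_apply, smul_eq_mul,
    show x (Sum.inl i) * (c * y (Sum.inl j)) = c * (x (Sum.inl i) * y (Sum.inl j)) by ring,
    mul_smul]

lemma bracket_edg_right (x : Niln G) (e : G.edgeSet) :
    bracket G x (edg G e) = 0 := by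
  rw [bracket]
  refine Finset.sum_eq_zero fun i _ => Finset.sum_eq_zero fun j _ => ?_
  simp [edg_apply]

lemma bracketVtx_eq_zero_iff (a b : V) :
    bracketVtx G a b = 0 ↔ ¬ G.Adj a b := by
  constructor
  · intro h hadj
    rw [bracketVtx, dif_pos hadj] at h
    rcases lt_or_ge a b with hl | hl
    · rw [if_pos hl] at h
      have := congrFun h (Sum.inr ⟨s(a,b), G.mem_edgeSet.mpr hadj⟩)
      simp [edg_apply] at this
    · rw [if_neg (not_lt.mpr hl)] at h
      have := congrFun h (Sum.inr ⟨s(a,b), G.mem_edgeSet.mpr hadj⟩)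
      simp [edg_apply] at this
  · intro h; rw [bracketVtx, dif_neg h]

lemma bracketVtx_support {a b : V} {c : V ⊕ G.edgeSet} (h : bracketVtx G a b c ≠ 0) :
    ∃ hadj : G.Adj a b, c = Sum.inr ⟨s(a,b), G.mem_edgeSet.mpr hadj⟩ := by
  by_cases hadj : G.Adj a b
  · refine ⟨hadj, ?_⟩
    rw [bracketVtx, dif_pos hadj] at h
    by_cases hl : a < b
    · rw [if_pos hl, edg_apply] at h
      by_contra hc; simp [hc] at h
    · rw [if_neg hl] at h
      rw [Pi.neg_apply, edg_apply] at h
      by_contra hc; simp [hc] at h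
  · rw [bracketVtx, dif_neg hadj] at h
    simp at h

lemma j_inj (Jc : AdaptedCS G) : Function.Injective Jc.J := by
  intro x y h
  have hx := Jc.j_squared x
  have hy := Jc.j_squared y
  rw [h, hy] at hx
  exact (neg_injective hx).symm

/-- normalized form of adaptedness on vertices -/
lemma adapted_vtx (Jc : AdaptedCS G) (u : V) :
    (∃ (u' : V) (δ : ℝ), (δ = 1 ∨ δ = -1) ∧ Jc.J (vtx G u) = δ • vtx G u') ∨
    (∃ (e : G.edgeSet) (δ : ℝ), (δ = 1 ∨ δ = -1) ∧ Jc.J (vtx G u) = δ • edg G e) := by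
  rcases Jc.adapted (Sum.inl u) with ⟨b', hb⟩ | ⟨b', hb⟩
  · rcases b' with u' | e
    · exact Or.inl ⟨u', 1, Or.inl rfl, by simpa [basisVec, vtx] using hb⟩
    · exact Or.inr ⟨e, 1, Or.inl rfl, by simpa [basisVec, edg, vtx] using hb⟩
  · rcases b' with u' | e
    · refine Or.inl ⟨u', -1, Or.inr rfl, ?_⟩
      rw [show ((-1 : ℝ) • vtx G u') = - vtx G u' by simp]
      simpa [basisVec, vtx] using hb
    · refine Or.inr ⟨e, -1, Or.inr rfl, ?_⟩
      rw [show ((-1 : ℝ) • edg G e) = - edg G e by simp]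
      simpa [basisVec, edg, vtx] using hb

lemma smul_vtx_inj {a b : V} {δ₁ δ₂ : ℝ} (h₁ : δ₁ = 1 ∨ δ₁ = -1)
    (h : δ₁ • vtx G a = δ₂ • vtx G b) : a = b := by
  by_contra hab
  have := congrFun h (Sum.inl a)
  rw [Pi.smul_apply, Pi.smul_apply, smul_eq_mul, smul_eq_mul, vtx_apply, vtx_apply] at this
  simp [hab] at this
  rcases h₁ with rfl | rfl <;> simp_all


open scoped Classical in
/-- parity of the number of nonzero coordinates -/
noncomputable def P (x : Niln G) : ZMod 2 :=
  ∑ b : V ⊕ G.edgeSet, if x b = 0 then 0 else 1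

lemma P_neg (x : Niln G) : P (-x) = P x := by
  classical
  unfold P
  refine Finset.sum_congr rfl fun b _ => ?_
  simp [neg_eq_zero]

lemma P_smul_sign {δ : ℝ} (h : δ = 1 ∨ δ = -1) (x : Niln G) : P (δ • x) = P x := by
  rcases h with rfl | rfl
  · rw [one_smul]
  · rw [neg_one_smul]; exact P_neg x

lemma P_add_disjoint {x y : Niln G} (h : ∀ c, x c ≠ 0 → y c = 0) :
    P (x + y) = P x + P y := by
  classical
  unfold P
  rw [← Finset.sum_add_distrib]
  refine Finset.sum_congr rfl fun b _ => ?_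
  by_cases hx : x b = 0
  · simp [hx]
  · have hy := h b hx
    simp [hx, hy]

lemma P_bracketVtx (a b : V) :
    P (bracketVtx G a b) = if G.Adj a b then 1 else 0 := by
  classical
  by_cases hadj : G.Adj a b
  · rw [if_pos hadj]
    have hP : ∀ e : G.edgeSet, P (edg G e) = 1 := by
      intro e
      unfold P
      rw [Finset.sum_eq_single (Sum.inr e)]
      · simp [edg_apply]
      · intro c _ hc; simp [edg_apply, hc]
      · intro h; exact absurd (Finset.mem_univ _) h
    rw [bracketVtx, dif_pos hadj]
    by_cases hl : a < b
    · rw [if_pos hl]; exact hP _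
    · rw [if_neg hl, P_neg]; exact hP _
  · rw [if_neg hadj, bracketVtx, dif_neg hadj]
    unfold P
    simp

/-- J preserves the parity of the support. -/
lemma P_J (Jc : AdaptedCS G) (x : Niln G) : P (Jc.J x) = P x := by
  classical
  -- normalized adaptedness on all basis vectors
  have had : ∀ b : V ⊕ G.edgeSet, ∃ (b' : V ⊕ G.edgeSet) (δ : ℝ),
      (δ = 1 ∨ δ = -1) ∧ Jc.J (basisVec G b) = δ • basisVec G b' := by
    intro b
    rcases Jc.adapted b with ⟨b', hb⟩ | ⟨b', hb⟩
    · exact ⟨b', 1, Or.inl rfl, by simpa using hb⟩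
    · exact ⟨b', -1, Or.inr rfl, by rw [neg_one_smul]; simpa using hb⟩
  choose σ δ hδ hσ using had
  have hbasis_ne : ∀ b : V ⊕ G.edgeSet, basisVec G b ≠ 0 := by
    intro b h
    have := congrFun h b
    simp [basisVec, Pi.single_apply] at this
  have hδne : ∀ b, δ b ≠ 0 := by
    intro b; rcases hδ b with h | h <;> rw [h] <;> norm_num
  have hσinj : Function.Injective σ := by
    intro b₁ b₂ h
    have h1 := hσ b₁
    have h2 := hσ b₂
    rw [h] at h1
    have : Jc.J (basisVec G b₁) = (δ b₁ * (δ b₂)⁻¹) • Jc.J (basisVec G b₂) := by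
      rw [h1, h2, smul_smul, mul_assoc, inv_mul_cancel₀ (hδne b₂), mul_one]
    rw [← map_smul] at this
    have heq := j_inj Jc this
    have := congrFun heq b₂
    rw [Pi.smul_apply, smul_eq_mul] at this
    by_contra hb
    simp [basisVec, Pi.single_apply, hb, Ne.symm hb] at this
    rcases this with h' | h'
    exacts [hδne _ h', hδne _ h']
  have hσbij : Function.Bijective σ := (Finite.injective_iff_bijective).mp hσinj
  let e : (V ⊕ G.edgeSet) ≃ (V ⊕ G.edgeSet) := Equiv.ofBijective σ hσbij
  -- coordinate formula for J x
  have hx : x = ∑ b : V ⊕ G.edgeSet, x b • basisVec G b := by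
    funext c
    rw [Finset.sum_apply]
    rw [Finset.sum_eq_single c]
    · simp [basisVec, Pi.single_apply]
    · intro b _ hb; simp [basisVec, Pi.single_apply, Ne.symm hb]
    · intro h; exact absurd (Finset.mem_univ _) h
  have hJx : ∀ c, Jc.J x c = (x (e.symm c) * δ (e.symm c)) := by
    intro c
    conv_lhs => rw [hx]
    rw [map_sum]
    simp_rw [map_smul, hσ]
    rw [Finset.sum_apply]
    rw [Finset.sum_eq_single (e.symm c)]
    · have : σ (e.symm c) = c := e.apply_symm_apply c
      simp [basisVec, Pi.single_apply, this, smul_smul]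
    · intro b _ hb
      have : σ b ≠ c := fun hc => hb (by rw [← hc, show σ b = e b from rfl, Equiv.symm_apply_apply])
      simp [basisVec, Pi.single_apply, Ne.symm this]
    · intro h; exact absurd (Finset.mem_univ _) h
  unfold P
  rw [← Equiv.sum_comp e.symm (fun b => if x b = 0 then (0 : ZMod 2) else 1)]
  refine Finset.sum_congr rfl fun c _ => ?_
  rw [hJx c]
  by_cases h : x (e.symm c) = 0 <;> simp [h, hδne]

lemma sym2_ne {a b a' b' : V} (h1 : a ≠ a') (h2 : a ≠ b') : s(a,b) ≠ s(a',b') := by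
  intro h
  rw [Sym2.eq_iff] at h
  rcases h with ⟨h, _⟩ | ⟨h, _⟩
  exacts [h1 h, h2 h]

lemma bracketVtx_disj {a b a' b' : V} (h : s(a,b) ≠ s(a',b')) :
    ∀ c, bracketVtx G a b c ≠ 0 → bracketVtx G a' b' c = 0 := by
  intro c h1
  obtain ⟨hadj, rfl⟩ := bracketVtx_support h1
  by_contra h2
  obtain ⟨hadj', hc⟩ := bracketVtx_support h2
  rw [Sum.inr.injEq, Subtype.mk.injEq] at hc
  exact h hc

section Main

variable (Jc : AdaptedCS G) {v w : V} (hvw : Jc.J (vtx G v) = vtx G w)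

include hvw

lemma hJw : Jc.J (vtx G w) = -vtx G v := by
  have h := Jc.j_squared (vtx G v)
  rwa [hvw] at h

lemma v_ne_w : v ≠ w := by
  intro h
  subst h
  have h2 := hJw Jc hvw
  rw [hvw] at h2
  have := congrFun h2 (Sum.inl v)
  simp [vtx_apply] at this
  norm_num at this

lemma jswap {u u' : V} {δ : ℝ} (hδ : δ = 1 ∨ δ = -1)
    (hu : Jc.J (vtx G u) = δ • vtx G u') : Jc.J (vtx G u') = (-δ) • vtx G u := by
  have h := Jc.j_squared (vtx G u)
  rw [hu, map_smul] at h
  rcases hδ with rfl | rfl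
  · rw [one_smul] at h
    rw [h]
    funext c; simp
  · rw [neg_one_smul] at h
    have := neg_injective h
    rw [this]
    funext c; simp

omit hvw in
lemma vt_no_fix {u : V} {δ : ℝ} (hδ : δ = 1 ∨ δ = -1) (hu : Jc.J (vtx G u) = δ • vtx G u) : False := by
  have h := Jc.j_squared (vtx G u)
  rw [hu, map_smul, hu, smul_smul] at h
  have hδδ : δ * δ = 1 := by rcases hδ with rfl | rfl <;> norm_num
  rw [hδδ, one_smul] at h
  have := congrFun h (Sum.inl u)
  simp [vtx_apply] at this
  norm_num at this

/-- Key parity identity for a vertex-type vertex `u` with partner `u'`. -/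
lemma key_vertex {u u' : V} {δ : ℝ} (hδ : δ = 1 ∨ δ = -1)
    (hu : Jc.J (vtx G u) = δ • vtx G u') :
    (if G.Adj v u then (1 : ZMod 2) else 0) + (if G.Adj w u then 1 else 0) =
    (if G.Adj v u' then 1 else 0) + (if G.Adj w u' then 1 else 0) := by
  have hvw' : v ≠ w := v_ne_w Jc hvw
  by_cases huv : u = v
  · subst huv
    rw [hvw] at hu
    have : w = u' := smul_vtx_inj (Or.inl rfl) (by rw [one_smul]; exact hu)
    subst this
    have h1 : ¬ G.Adj u u := G.irrefl
    have h3 : ¬ G.Adj w w := G.irrefl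
    have h2 : G.Adj u w ↔ G.Adj w u := G.adj_comm u w
    rw [if_neg h1, if_neg h3, if_congr h2 rfl rfl]
    ring
  by_cases huw : u = w
  · subst huw
    rw [hJw Jc hvw] at hu
    have : v = u' := smul_vtx_inj (Or.inr rfl) (by rw [neg_one_smul]; exact hu)
    subst this
    have h1 : ¬ G.Adj u u := G.irrefl
    have h3 : ¬ G.Adj v v := G.irrefl
    have h2 : G.Adj v u ↔ G.Adj u v := G.adj_comm v u
    rw [if_neg h1, if_neg h3, if_congr h2 rfl rfl]
    ring
  -- generic case
  have hmδ : -δ = 1 ∨ -δ = -1 := by rcases hδ with rfl | rfl <;> simp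
  have hu'v : u' ≠ v := by
    intro h
    have h2 := jswap Jc hvw hδ hu
    rw [h, hvw] at h2
    have h3 : w = u := smul_vtx_inj (Or.inl rfl) (by rw [one_smul]; exact h2)
    exact huw h3.symm
  have hu'w : u' ≠ w := by
    intro h
    have h2 := jswap Jc hvw hδ hu
    rw [h, hJw Jc hvw] at h2
    have h3 : (-δ) • vtx G u = (-1 : ℝ) • vtx G v := by rw [← h2, neg_one_smul]
    exact huv (smul_vtx_inj hmδ h3)
  -- integrability
  have hint := Jc.integrable (vtx G v) (vtx G u)
  rw [hvw, hu, bracket_smul_right, bracket_smul_right, bracket_vtx_vtx, bracket_vtx_vtx,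
    bracket_vtx_vtx, bracket_vtx_vtx] at hint
  have hJz : Jc.J (bracketVtx G w u + δ • bracketVtx G v u') =
      δ • bracketVtx G w u' - bracketVtx G v u :=
    eq_sub_of_add_eq' (sub_eq_zero.mp hint)
  have hne1 : s(w,u) ≠ s(v,u') := sym2_ne (fun h => (v_ne_w Jc hvw) h.symm) (fun h => hu'w h.symm)
  have hne2 : s(v,u) ≠ s(w,u') := sym2_ne (v_ne_w Jc hvw) (fun h => hu'v h.symm)
  have hP : P (bracketVtx G w u + δ • bracketVtx G v u') =
      P (δ • bracketVtx G w u' - bracketVtx G v u) := by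
    rw [← P_J Jc, hJz]
  have hPL : P (bracketVtx G w u + δ • bracketVtx G v u') =
      (if G.Adj w u then 1 else 0) + (if G.Adj v u' then 1 else 0) := by
    have hdis : ∀ c, bracketVtx G w u c ≠ 0 → (δ • bracketVtx G v u') c = 0 := by
      intro c hc
      rw [Pi.smul_apply, bracketVtx_disj hne1 c hc, smul_zero]
    rw [P_add_disjoint hdis, P_smul_sign hδ, P_bracketVtx, P_bracketVtx]
  have hPR : P (δ • bracketVtx G w u' - bracketVtx G v u) =
      (if G.Adj w u' then 1 else 0) + (if G.Adj v u then 1 else 0) := by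
    have hdis : ∀ c, (δ • bracketVtx G w u') c ≠ 0 → (-(bracketVtx G v u)) c = 0 := by
      intro c hc
      rw [Pi.smul_apply, smul_eq_mul] at hc
      have hc' : bracketVtx G w u' c ≠ 0 := by
        intro h0; rw [h0, mul_zero] at hc; exact hc rfl
      rw [Pi.neg_apply, bracketVtx_disj (Ne.symm hne2) c hc', neg_zero]
    rw [sub_eq_add_neg, P_add_disjoint hdis, P_smul_sign hδ, P_neg, P_bracketVtx, P_bracketVtx]
  rw [hPL, hPR] at hP
  have hZ : ∀ a b c d : ZMod 2, b + c = d + a → a + b = c + d := by decide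
  exact hZ _ _ _ _ hP

lemma key_edge {u : V} {e : G.edgeSet} {δ : ℝ} (hδ : δ = 1 ∨ δ = -1)
    (hu : Jc.J (vtx G u) = δ • edg G e) :
    (if G.Adj v u then (1 : ZMod 2) else 0) + (if G.Adj w u then 1 else 0) = 0 := by
  have hint := Jc.integrable (vtx G v) (vtx G u)
  rw [hvw, hu, bracket_smul_right, bracket_smul_right, bracket_edg_right, bracket_edg_right,
    bracket_vtx_vtx, bracket_vtx_vtx] at hint
  simp only [smul_zero, add_zero, sub_zero] at hint
  have h0 : bracketVtx G v u = Jc.J (-(bracketVtx G w u)) := by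
    rw [map_neg]
    exact eq_neg_of_add_eq_zero_left hint
  have hiff : G.Adj v u ↔ G.Adj w u := by
    constructor
    · intro h
      by_contra h2
      rw [(bracketVtx_eq_zero_iff w u).mpr h2, neg_zero, map_zero] at h0
      exact (bracketVtx_eq_zero_iff v u).mp h0 h
    · intro h
      by_contra h2
      rw [(bracketVtx_eq_zero_iff v u).mpr h2] at h0
      have h3 : -(bracketVtx G w u) = 0 := j_inj Jc (by rw [← h0, map_zero])
      exact (bracketVtx_eq_zero_iff w u).mp (neg_eq_zero.mp h3) h
  rw [if_congr hiff rfl rfl]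
  by_cases h : G.Adj w u <;> simp [h] <;> decide

end Main

/-- If `v` and `w` are vertices of `G` with `w = Jv`, then `deg v` and
`deg w` have the same parity. -/
theorem statement7 (Jc : AdaptedCS G) (v w : V)
    (hvw : Jc.J (vtx G v) = vtx G w) :
    (Even (G.degree v) ↔ Even (G.degree w)) := by
  classical
  have key : ∑ u : V, ((if G.Adj v u then (1 : ZMod 2) else 0)
      + (if G.Adj w u then 1 else 0)) = 0 := by
    set Q : V → Prop := fun u =>
      ∃ (u' : V) (δ : ℝ), (δ = 1 ∨ δ = -1) ∧ Jc.J (vtx G u) = δ • vtx G u' with hQdef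
    rw [← Finset.sum_filter_add_sum_filter_not Finset.univ Q]
    have h2 : ∑ u ∈ Finset.univ.filter (fun u => ¬ Q u),
        ((if G.Adj v u then (1 : ZMod 2) else 0) + (if G.Adj w u then 1 else 0)) = 0 := by
      refine Finset.sum_eq_zero fun u hu => ?_
      have hnq : ¬ Q u := (Finset.mem_filter.mp hu).2
      rcases adapted_vtx Jc u with ⟨u', δ, hδ, hJu⟩ | ⟨e, δ, hδ, hJu⟩
      · exact absurd ⟨u', δ, hδ, hJu⟩ hnq
      · exact key_edge Jc hvw hδ hJu
    have h1 : ∑ u ∈ Finset.univ.filter Q,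
        ((if G.Adj v u then (1 : ZMod 2) else 0) + (if G.Adj w u then 1 else 0)) = 0 := by
      have hxx : ∀ x : ZMod 2, x + x = 0 := by decide
      have hQ' : ∀ u, Q u → ∃ (u' : V) (δ : ℝ),
          (δ = 1 ∨ δ = -1) ∧ Jc.J (vtx G u) = δ • vtx G u' := fun u h => h
      let g : ∀ u ∈ Finset.univ.filter Q, V :=
        fun u hu => Classical.choose ((Finset.mem_filter.mp hu).2)
      have hspec : ∀ u (hu : u ∈ Finset.univ.filter Q), ∃ δ : ℝ,
          (δ = 1 ∨ δ = -1) ∧ Jc.J (vtx G u) = δ • vtx G (g u hu) :=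
        fun u hu => Classical.choose_spec ((Finset.mem_filter.mp hu).2)
      have g_mem : ∀ u hu, g u hu ∈ Finset.univ.filter Q := by
        intro u hu
        obtain ⟨δ, hδ, hJ⟩ := hspec u hu
        rw [Finset.mem_filter]
        exact ⟨Finset.mem_univ _, u, -δ,
          by rcases hδ with rfl | rfl <;> simp, jswap Jc hvw hδ hJ⟩
      refine Finset.sum_involution g ?_ ?_ g_mem ?_
      · intro a ha
        obtain ⟨δ, hδ, hJ⟩ := hspec a ha
        rw [key_vertex Jc hvw hδ hJ]
        exact hxx _
      · intro a ha _
        obtain ⟨δ, hδ, hJ⟩ := hspec a ha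
        intro h
        have h' : Jc.J (vtx G a) = δ • vtx G a := by rw [hJ, h]
        exact vt_no_fix Jc hδ h'
      · intro a ha
        obtain ⟨δ, hδ, hJ⟩ := hspec a ha
        obtain ⟨δ₂, hδ₂, hJ₂⟩ := hspec (g a ha) (g_mem a ha)
        have h3 := jswap Jc hvw hδ hJ
        rw [hJ₂] at h3
        exact smul_vtx_inj hδ₂ h3
    rw [h1, h2, add_zero]
  have hdeg : ∀ a : V, (G.degree a : ZMod 2) = ∑ u : V, (if G.Adj a u then 1 else 0) := by
    intro a
    rw [Finset.sum_boole, SimpleGraph.degree, SimpleGraph.neighborFinset_eq_filter]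
  rw [Finset.sum_add_distrib] at key
  have hvweq : (G.degree v : ZMod 2) = (G.degree w : ZMod 2) := by
    rw [hdeg, hdeg]
    have : ∀ a b : ZMod 2, a + b = 0 → a = b := by decide
    exact this _ _ key
  rw [← ZMod.natCast_eq_zero_iff_even, ← ZMod.natCast_eq_zero_iff_even, hvweq]


end GraphLie
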